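/- arXiv:1106.0769 — 3 statements merged into one kernel-verified Lean document; each statement's English description precedes it below -/
import Mathlib

section
/- Let A be a symmetric n×n real matrix with nonnegative entries and zero diagonal (a weighted graph G), with degrees d_i = Σ_j a_{ij} ordered so that d_1 ≤ d_2 ≤ … ≤ d_n, and Laplacian L = D − A. For 1 ≤ m ≤ n, let Δ(G_{l_m}) = max_{m ≤ i ≤ n} Σ_{m ≤ j ≤ n} a_{ij} be the maximum degree of the subgraph induced on the n−m+1 vertices of largest degree. Then the m-th smallest eigenvalue of L satisfies λ_m(G) ≥ d_m − Δ(G_{l_m}). -/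
/-!
On vectors supported on the set `F = l_m` of the `n - m + 1` vertices of largest degree, the
Laplacian form `xᵀ L x = ∑ dᵢ xᵢ² - ∑ aᵢⱼ xᵢ xⱼ` is at least `c ‖x‖²` with
`c = d_m - Δ(G_{l_m})`: there `dᵢ ≥ d_m`, and `2 xᵢ xⱼ ≤ xᵢ² + xⱼ²` bounds the adjacency part by
the row sums of `A` inside `F`. On the span of the eigenvectors with eigenvalue `< c` the form is
`< c ‖x‖²` away from `0`, so that span meets the `(n - m + 1)`-dimensional coordinate subspace of
`F` trivially. Hence at most `m - 1` eigenvalues are `< c`, that is `λ_m ≥ c`.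
-/

open Finset Module RCLike Matrix
open scoped InnerProductSpace

namespace OrthonormalBasis

variable {ι 𝕜 E : Type*} [Fintype ι] [RCLike 𝕜] [NormedAddCommGroup E]
  [InnerProductSpace 𝕜 E] (b : OrthonormalBasis ι 𝕜 E) (S : Finset ι)

theorem finrank_span_finset :
    finrank 𝕜 (Submodule.span 𝕜 (Set.range fun i : S => b i)) = #S :=
  (finrank_span_eq_card (b.orthonormal.linearIndependent.comp _ Subtype.val_injective)).trans
    (Fintype.card_coe S)

theorem inner_eq_zero_of_mem_span_finset {x : E}
    (hx : x ∈ Submodule.span 𝕜 (Set.range fun i : S => b i)) {i : ι} (hi : i ∉ S) :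
    ⟪b i, x⟫_𝕜 = 0 := by
  classical
  suffices h : Submodule.span 𝕜 (Set.range fun i : S => b i) ≤ (𝕜 ∙ b i)ᗮ from
    Submodule.mem_orthogonal_singleton_iff_inner_right.mp (h hx)
  rw [Submodule.span_le]
  rintro _ ⟨j, rfl⟩
  rw [SetLike.mem_coe, Submodule.mem_orthogonal_singleton_iff_inner_right,
    orthonormal_iff_ite.mp b.orthonormal, if_neg (by rintro rfl; exact hi j.2)]

end OrthonormalBasis

namespace LinearMap.IsSymmetric

variable {𝕜 E : Type*} [RCLike 𝕜] [NormedAddCommGroup E] [InnerProductSpace 𝕜 E]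
  [FiniteDimensional 𝕜 E] {T : E →ₗ[𝕜] E} {n : ℕ}

theorem re_inner_apply_self_eq_sum (hT : T.IsSymmetric) (hn : finrank 𝕜 E = n) (x : E) :
    re ⟪T x, x⟫_𝕜 =
      ∑ i, hT.eigenvalues hn i * ‖⟪hT.eigenvectorBasis hn i, x⟫_𝕜‖ ^ 2 := by
  rw [← (hT.eigenvectorBasis hn).sum_inner_mul_inner, map_sum]
  refine sum_congr rfl fun i _ => ?_
  rw [hT, apply_eigenvectorBasis, inner_smul_right, mul_assoc, re_ofReal_mul,
    inner_mul_symm_re_eq_norm, norm_mul, ← inner_conj_symm, norm_conj, sq]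

theorem re_inner_apply_self_lt_of_mem_span (hT : T.IsSymmetric) (hn : finrank 𝕜 E = n)
    {c : ℝ} {x : E}
    (hx : x ∈ Submodule.span 𝕜 (Set.range fun i : ({i | hT.eigenvalues hn i < c} :
      Finset (Fin n)) => hT.eigenvectorBasis hn i))
    (hx0 : x ≠ 0) :
    re ⟪T x, x⟫_𝕜 < c * ‖x‖ ^ 2 := by
  set b := hT.eigenvectorBasis hn
  set S : Finset (Fin n) := {i | hT.eigenvalues hn i < c}
  have hsum : c * ‖x‖ ^ 2 - re ⟪T x, x⟫_𝕜 =
      ∑ i, (c - hT.eigenvalues hn i) * ‖⟪b i, x⟫_𝕜‖ ^ 2 := by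
    rw [hT.re_inner_apply_self_eq_sum hn, ← b.sum_sq_norm_inner_right, mul_sum,
      ← sum_sub_distrib]
    simp only [sub_mul, b]
  have hterm_nonneg : ∀ i ∈ univ, 0 ≤ (c - hT.eigenvalues hn i) * ‖⟪b i, x⟫_𝕜‖ ^ 2 := by
    intro i _
    by_cases hi : i ∈ S
    · exact mul_nonneg (sub_nonneg.mpr (mem_filter.mp hi).2.le) (by positivity)
    · rw [b.inner_eq_zero_of_mem_span_finset S hx hi, norm_zero]
      simp
  obtain ⟨i, hi⟩ : ∃ i, ⟪b i, x⟫_𝕜 ≠ 0 := by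
    by_contra! h
    exact hx0 (by simpa [h] using (b.sum_repr' x).symm)
  have hiS : i ∈ S := by
    by_contra hiS
    exact hi (b.inner_eq_zero_of_mem_span_finset S hx hiS)
  have hpos : 0 < ∑ i, (c - hT.eigenvalues hn i) * ‖⟪b i, x⟫_𝕜‖ ^ 2 :=
    sum_pos' hterm_nonneg ⟨i, mem_univ i,
      mul_pos (sub_pos.mpr (mem_filter.mp hiS).2) (by positivity)⟩
  linarith

theorem finrank_le_card_filter_le_eigenvalues (hT : T.IsSymmetric) (hn : finrank 𝕜 E = n)
    {c : ℝ} {V : Submodule 𝕜 E} (hV : ∀ x ∈ V, c * ‖x‖ ^ 2 ≤ re ⟪T x, x⟫_𝕜) :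
    finrank 𝕜 V ≤ #{i | c ≤ hT.eigenvalues hn i} := by
  set S : Finset (Fin n) := {i | hT.eigenvalues hn i < c}
  set W := Submodule.span 𝕜 (Set.range fun i : S => hT.eigenvectorBasis hn i)
  have hWV : W ⊓ V = ⊥ := by
    refine (Submodule.eq_bot_iff _).mpr fun x hx => ?_
    obtain ⟨hxW, hxV⟩ := Submodule.mem_inf.mp hx
    by_contra hx0
    exact (hV x hxV).not_gt (hT.re_inner_apply_self_lt_of_mem_span hn hxW hx0)
  have hdim := Submodule.finrank_sup_add_finrank_inf_eq W V
  rw [hWV, finrank_bot, OrthonormalBasis.finrank_span_finset] at hdim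
  have hle : finrank 𝕜 ↥(W ⊔ V) ≤ n := hn ▸ Submodule.finrank_le _
  have hsplit : #S + #{i | c ≤ hT.eigenvalues hn i} = n := by
    simpa [S, not_lt] using
      card_filter_add_card_filter_not (s := univ) (p := (· < c) ∘ hT.eigenvalues hn)
  omega

end LinearMap.IsSymmetric

theorem Monotone.le_of_sub_le_card_filter_le {α : Type*} [Preorder α] [DecidableLE α]
    {n : ℕ} {f : Fin n → α} (hf : Monotone f) {c : α} (k : Fin n)
    (h : n - k ≤ #{i | c ≤ f i}) : c ≤ f k := by
  by_contra hk
  have hsub : ({i | c ≤ f i} : Finset (Fin n)) ⊆ Ioi k := fun i hi => by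
    rw [mem_filter] at hi
    rw [mem_Ioi]
    by_contra hik
    exact hk (hi.2.trans (hf (not_lt.mp hik)))
  have := h.trans (card_le_card hsub)
  rw [Fin.card_Ioi] at this
  omega

theorem Finset.card_filter_eq_of_map_univ_eq {α ι κ : Type*} [Fintype ι] [Fintype κ]
    {f : ι → α} {g : κ → α} (h : univ.val.map f = univ.val.map g) (p : α → Prop)
    [DecidablePred p] : #{i | p (f i)} = #{j | p (g j)} := by
  simpa [Multiset.filter_map, card_def] using congrArg (fun s => (s.filter p).card) h

namespace Matrix

variable {ι : Type*} [Fintype ι]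

theorem dotProduct_mulVec_le_of_forall_notMem_eq_zero {A : Matrix ι ι ℝ} (hA : A.IsSymm)
    (hA0 : ∀ i j, 0 ≤ A i j) {F : Finset ι} {Δ : ℝ} (hΔ : ∀ i ∈ F, ∑ j ∈ F, A i j ≤ Δ)
    {x : ι → ℝ} (hx : ∀ i ∉ F, x i = 0) :
    x ⬝ᵥ A *ᵥ x ≤ Δ * (x ⬝ᵥ x) := by
  have hrestrict : ∀ g : ι → ℝ, ∑ i, g i * x i = ∑ i ∈ F, g i * x i := fun g =>
    (sum_subset (subset_univ F) fun i _ hi => by rw [hx i hi, mul_zero]).symm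
  calc x ⬝ᵥ A *ᵥ x = ∑ i ∈ F, ∑ j ∈ F, A i j * (x i * x j) := by
        rw [dotProduct_comm, dotProduct, hrestrict]
        refine sum_congr rfl fun i _ => ?_
        rw [mulVec, dotProduct, hrestrict, sum_mul]
        exact sum_congr rfl fun j _ => by ring
    _ ≤ ∑ i ∈ F, ∑ j ∈ F, A i j * ((x i ^ 2 + x j ^ 2) / 2) := by
        gcongr with i _ j _
        · exact hA0 i j
        · linarith [two_mul_le_add_sq (x i) (x j)]
    _ = ∑ i ∈ F, (∑ j ∈ F, A i j) * x i ^ 2 := by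
        have hsplit : ∑ i ∈ F, ∑ j ∈ F, A i j * ((x i ^ 2 + x j ^ 2) / 2) =
            (∑ i ∈ F, ∑ j ∈ F, A i j * x i ^ 2 + ∑ i ∈ F, ∑ j ∈ F, A i j * x j ^ 2) / 2 := by
          simp only [← sum_add_distrib, sum_div]
          exact sum_congr rfl fun i _ => sum_congr rfl fun j _ => by ring
        have hswap : ∑ i ∈ F, ∑ j ∈ F, A i j * x j ^ 2 = ∑ i ∈ F, ∑ j ∈ F, A i j * x i ^ 2 := by
          rw [sum_comm]
          exact sum_congr rfl fun i _ => sum_congr rfl fun j _ => by rw [hA.apply j i]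
        rw [hsplit, hswap, add_self_div_two]
        simp only [sum_mul]
    _ ≤ ∑ i ∈ F, Δ * x i ^ 2 := by
        gcongr with i hi
        exact hΔ i hi
    _ = Δ * (x ⬝ᵥ x) := by
        rw [dotProduct, hrestrict, mul_sum]
        exact sum_congr rfl fun i _ => by ring

variable [DecidableEq ι]

theorem mul_dotProduct_self_le_dotProduct_diagonal_sub_mulVec {A : Matrix ι ι ℝ}
    (hA : A.IsSymm) (hA0 : ∀ i j, 0 ≤ A i j) {d : ι → ℝ} {F : Finset ι} {δ Δ : ℝ}
    (hδ : ∀ i ∈ F, δ ≤ d i) (hΔ : ∀ i ∈ F, ∑ j ∈ F, A i j ≤ Δ) {x : ι → ℝ}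
    (hx : ∀ i ∉ F, x i = 0) :
    (δ - Δ) * (x ⬝ᵥ x) ≤ x ⬝ᵥ (diagonal d - A) *ᵥ x := by
  have hdiag : δ * (x ⬝ᵥ x) ≤ x ⬝ᵥ diagonal d *ᵥ x := by
    simp only [dotProduct, mulVec_diagonal, mul_sum]
    refine sum_le_sum fun i _ => ?_
    by_cases hi : i ∈ F
    · nlinarith [hδ i hi, mul_self_nonneg (x i)]
    · simp [hx i hi]
  rw [sub_mulVec, dotProduct_sub, sub_mul]
  exact sub_le_sub hdiag (dotProduct_mulVec_le_of_forall_notMem_eq_zero hA hA0 hΔ hx)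

end Matrix

open Finset in
/-- Weighted lower bound: `λ_m(G) ≥ d_m - Δ(G_{l_m})`, where `G_{l_m}` is the subgraph
induced on the `n - m + 1` vertices of largest degree. -/
theorem weighted_lap_eigenvalue_lower_bound (n m : ℕ) (hm : 1 ≤ m) (hmn : m ≤ n)
    (A : Matrix (Fin n) (Fin n) ℝ) (hsymm : A.IsSymm)
    (hnonneg : ∀ i j, 0 ≤ A i j)
    (hmono : Monotone (fun i : Fin n => ∑ j, A i j))
    (eigs : Fin n → ℝ) (heigs : Monotone eigs)
    (hroots : (Matrix.diagonal (fun i => ∑ j, A i j) - A).charpoly.roots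
      = Finset.univ.val.map eigs) :
    eigs ⟨m - 1, by omega⟩ ≥ (∑ j, A ⟨m - 1, by omega⟩ j) -
      (Finset.univ.filter (fun i : Fin n => m - 1 ≤ i.val)).sup'
        ⟨⟨m - 1, by omega⟩, by simp; omega⟩
        (fun i => ∑ j ∈ Finset.univ.filter (fun j : Fin n => m - 1 ≤ j.val), A i j) := by
  set k : Fin n := ⟨m - 1, by omega⟩
  set F : Finset (Fin n) := Finset.univ.filter (fun i : Fin n => m - 1 ≤ i.val)
  set L := diagonal (fun i => ∑ j, A i j) - A
  set c := (∑ j, A k j) - F.sup' ⟨k, by simp [F, k]; omega⟩ (fun i => ∑ j ∈ F, A i j)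
  show eigs k ≥ c
  have hF : F = Ici k := by ext i; simp [F, k, Fin.le_def]
  have hT : (toEuclideanLin L).IsSymmetric := isSymmetric_toEuclideanLin_iff.mpr
    (isHermitian_iff_isSymm.mpr ((isSymm_diagonal _).sub hsymm))
  have hn : finrank ℝ (EuclideanSpace ℝ (Fin n)) = n := finrank_euclideanSpace_fin
  have hspec : univ.val.map (hT.eigenvalues hn) = univ.val.map eigs := by
    rw [← hroots, ← charpoly_toLin L (EuclideanSpace.basisFun _ ℝ).toBasis,
      ← toEuclideanLin_eq_toLin_orthonormal, hT.roots_charpoly_eq_eigenvalues hn]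
    rfl
  set e := EuclideanSpace.basisFun (Fin n) ℝ
  set V := Submodule.span ℝ (Set.range fun i : F => e i)
  have hV : ∀ x ∈ V, c * ‖x‖ ^ 2 ≤ re ⟪toEuclideanLin L x, x⟫_ℝ := fun x hx => by
    have hsupp : ∀ i ∉ F, x i = 0 := fun i hi => by
      rw [← EuclideanSpace.basisFun_inner]
      exact e.inner_eq_zero_of_mem_span_finset F hx hi
    rw [re_to_real, ← real_inner_self_eq_norm_sq, EuclideanSpace.inner_eq_star_dotProduct,
      EuclideanSpace.inner_eq_star_dotProduct]
    simpa [dotProduct_comm] using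
      mul_dotProduct_self_le_dotProduct_diagonal_sub_mulVec hsymm hnonneg
        (fun i hi => hmono (mem_Ici.mp (hF ▸ hi)))
        (fun i hi => le_sup' (fun i => ∑ j ∈ F, A i j) hi) hsupp
  refine heigs.le_of_sub_le_card_filter_le k ?_
  calc n - k = finrank ℝ V := by rw [e.finrank_span_finset, hF, Fin.card_Ici]
    _ ≤ #{i | c ≤ hT.eigenvalues hn i} := hT.finrank_le_card_filter_le_eigenvalues hn hV
    _ = #{i | c ≤ eigs i} := card_filter_eq_of_map_univ_eq hspec _
end

section
/- Let G be a finite simple graph on n vertices having at least one edge. Then the largest Laplacian eigenvalue satisfies λ_n(G) ≥ d_n(G) + 1, where d_n(G) is the maximum vertex degree of G. -/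
/-!
The Laplacian `L` is positive semidefinite with spectrum in `[0, λ]`, `λ` its largest eigenvalue,
so the functional calculus applied to `t ↦ λ t - t²` shows that `λ L - L²` is positive
semidefinite. At a vertex `v` of maximum degree `d` the diagonal entries are `L v v = d` and
`(L²) v v = Σ_u (L u v)² = d² + d`, whence `d² + d ≤ λ d`, i.e. `λ ≥ d + 1` as soon as `d ≥ 1`.
-/

open Finset Matrix
open scoped MatrixOrder ComplexOrder

theorem Multiset.exists_apply_eq_of_map_univ_eq {ι κ α : Type*} [Fintype ι] [Fintype κ]
    {f : ι → α} {g : κ → α} (h : univ.val.map f = univ.val.map g) (i : ι) : ∃ j, g j = f i := by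
  obtain ⟨j, -, hj⟩ := Multiset.mem_map.1 (h ▸ Multiset.mem_map_of_mem f (mem_univ_val i))
  exact ⟨j, hj⟩

theorem Matrix.PosSemidef.smul_sub_mul_self {n 𝕜 : Type*} [Fintype n] [DecidableEq n] [RCLike 𝕜]
    {A : Matrix n n 𝕜} (hA : A.PosSemidef) {M : ℝ} (hM : ∀ i, hA.1.eigenvalues i ≤ M) :
    (M • A - A * A).PosSemidef := by
  have hcfc : cfc (fun t : ℝ => M * t - t ^ 2) A = M • A - A * A := by
    rw [cfc_sub .., cfc_const_mul .., cfc_id' .., cfc_pow .., cfc_id' .., sq]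
  rw [← nonneg_iff_posSemidef, ← hcfc]
  refine cfc_nonneg fun t ht => ?_
  obtain ⟨i, rfl⟩ := hA.1.spectrum_real_eq_range_eigenvalues ▸ ht
  nlinarith [hA.eigenvalues_nonneg i, hM i]

namespace SimpleGraph

variable {V R : Type*} [Fintype V] [DecidableEq V] (G : SimpleGraph V) [DecidableRel G.Adj] [Ring R]

theorem lapMatrix_mulVec_single_self (v : V) :
    (G.lapMatrix R *ᵥ Pi.single v 1) v = G.degree v := by
  rw [lapMatrix_mulVec_apply, Pi.single_eq_same, mul_one, sub_eq_self]
  exact sum_eq_zero fun u hu =>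
    Pi.single_eq_of_ne (G.ne_of_adj ((G.mem_neighborFinset v u).1 hu)).symm _

theorem lapMatrix_mulVec_single_of_adj {u v : V} (h : G.Adj u v) :
    (G.lapMatrix R *ᵥ Pi.single v 1) u = -1 := by
  rw [lapMatrix_mulVec_apply, Pi.single_eq_of_ne h.ne, mul_zero, zero_sub, neg_inj,
    sum_pi_single', if_pos ((G.mem_neighborFinset u v).2 h)]

theorem lapMatrix_apply_self (v : V) : G.lapMatrix R v v = G.degree v := by
  simpa [mulVec_single_one] using G.lapMatrix_mulVec_single_self (R := R) v

theorem lapMatrix_mul_self_apply_self (v : V) :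
    (G.lapMatrix R * G.lapMatrix R) v v = G.degree v * G.degree v + G.degree v := by
  have hcol : (G.lapMatrix R * G.lapMatrix R) v v =
      (G.lapMatrix R *ᵥ (G.lapMatrix R *ᵥ Pi.single v 1)) v := by
    rw [mulVec_mulVec, mulVec_single_one, col_apply]
  rw [hcol, lapMatrix_mulVec_apply, lapMatrix_mulVec_single_self,
    sum_congr rfl fun u hu =>
      G.lapMatrix_mulVec_single_of_adj ((G.mem_neighborFinset v u).1 hu).symm]
  simp

end SimpleGraph

/-- Grone–Merris: if `G` has at least one edge, then `λ_n(G) ≥ d_n(G) + 1`. -/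
theorem lap_spectral_radius_ge_max_degree_add_one (n : ℕ) (hn : 0 < n)
    (G : SimpleGraph (Fin n)) [DecidableRel G.Adj]
    (hedge : ∃ u v : Fin n, G.Adj u v)
    (eigs : Fin n → ℝ) (heigs : Monotone eigs)
    (hroots : (G.lapMatrix ℝ).charpoly.roots = Finset.univ.val.map eigs)
    (d : Fin n → ℕ) (hd : Monotone d)
    (hdeg : Finset.univ.val.map d = Finset.univ.val.map (fun v => G.degree v)) :
    eigs ⟨n - 1, by omega⟩ ≥ (d ⟨n - 1, by omega⟩ : ℝ) + 1 := by
  set top : Fin n := ⟨n - 1, by omega⟩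
  have le_top (j : Fin n) : j ≤ top := Fin.le_def.2 (by simp only [top]; omega)
  have hL := G.posSemidef_lapMatrix ℝ
  have eigenvalues_le (i : Fin n) : hL.1.eigenvalues i ≤ eigs top := by
    have hspec := hL.1.roots_charpoly_eq_eigenvalues
    rw [hroots, RCLike.ofReal_real_eq_id, Function.id_comp] at hspec
    obtain ⟨j, hj⟩ := Multiset.exists_apply_eq_of_map_univ_eq hspec.symm i
    exact hj ▸ heigs (le_top j)
  obtain ⟨v, hv⟩ := Multiset.exists_apply_eq_of_map_univ_eq hdeg top
  have one_le_degree : 1 ≤ G.degree v := by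
    obtain ⟨u, w, huw⟩ := hedge
    obtain ⟨j, hj⟩ := Multiset.exists_apply_eq_of_map_univ_eq hdeg.symm u
    calc 1 ≤ G.degree u := (G.degree_pos_iff_exists_adj u).2 ⟨w, huw⟩
      _ = d j := hj.symm
      _ ≤ d top := hd (le_top j)
      _ = G.degree v := hv.symm
  have diag_nonneg := (hL.smul_sub_mul_self eigenvalues_le).diag_nonneg (i := v)
  rw [Matrix.sub_apply, Matrix.smul_apply, smul_eq_mul, G.lapMatrix_apply_self,
    G.lapMatrix_mul_self_apply_self] at diag_nonneg
  have one_le_degree' : (1 : ℝ) ≤ G.degree v := by exact_mod_cast one_le_degree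
  rw [← hv]
  nlinarith
end

section
/- Let G be a finite simple graph on n ≥ 2 vertices that is not the disjoint union K_2 + (n−2)K_1 of a single edge with n−2 isolated vertices. Then the second largest Laplacian eigenvalue satisfies λ_{n−1}(G) ≥ d_{n−1}(G), where d_{n−1}(G) is the second largest vertex degree of G. -/
/-- `G` is (up to relabeling of vertices) the disjoint union of a complete graph on the
`r` vertices of a set `S` with the remaining vertices isolated. -/
def IsCliquePlusIsolated {V : Type*} [Fintype V] (G : SimpleGraph V) (r : ℕ) : Prop :=
  ∃ S : Finset V, S.card = r ∧ ∀ u v : V, G.Adj u v ↔ u ≠ v ∧ u ∈ S ∧ v ∈ S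

/-!
Let `u ≠ v` be two vertices of degree at least `t = d_{n-1}` and `W = span {e_u, e_v}`. A direct
computation gives `t ⟪x, L x⟫ ≤ ‖L x‖²` on `W`, and `L` is injective on `W` unless `uv` is an
isolated edge; in that case, as `G ≠ K_2 + (n-2)K_1`, a third vertex with an edge can replace `v`.
If fewer than two eigenvalues of `L` were `≥ t`, some nonzero `x ∈ W` would be orthogonal to their
eigenvectors; in an eigenbasis, `‖L x‖² - t ⟪x, L x⟫ = ∑ λᵢ (λᵢ - t) cᵢ²` is then a sum of
nonpositive terms, so it vanishes, which forces `L x = 0`.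
-/

open Finset Matrix Module

section Spectral

variable {ι 𝕜 E : Type*} [Fintype ι] [RCLike 𝕜] [NormedAddCommGroup E] [InnerProductSpace 𝕜 E]
  {T : E →ₗ[𝕜] E} {b : OrthonormalBasis ι 𝕜 E} {μ : ι → 𝕜}

theorem OrthonormalBasis.repr_apply_of_apply_eq_smul (hb : ∀ i, T (b i) = μ i • b i)
    (x : E) (i : ι) : b.repr (T x) i = μ i * b.repr x i := by
  classical
  conv_lhs => rw [← b.sum_repr x]
  simp [hb, b.repr_self, Pi.single_apply, mul_comm]

theorem OrthonormalBasis.exists_mem_ne_zero_repr_eq_zero {W : Submodule 𝕜 E} {S : Finset ι}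
    (hS : #S < finrank 𝕜 W) : ∃ x ∈ W, x ≠ 0 ∧ ∀ i ∈ S, b.repr x i = 0 := by
  have : FiniteDimensional 𝕜 E := b.toBasis.finiteDimensional_of_finite
  let f : W →ₗ[𝕜] (S → 𝕜) := LinearMap.pi fun i => b.toBasis.coord i ∘ₗ W.subtype
  obtain ⟨⟨x, hxW⟩, hfx, hx0⟩ :=
    Submodule.exists_mem_ne_zero_of_ne_bot (f.ker_ne_bot_of_finrank_lt (by simpa using hS))
  refine ⟨x, hxW, fun h => hx0 (Subtype.ext h), fun i hi => ?_⟩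
  simpa [f, b.coe_toBasis_repr_apply] using congrFun hfx ⟨i, hi⟩

end Spectral

section RealSpectral

variable {ι E : Type*} [Fintype ι] [NormedAddCommGroup E] [InnerProductSpace ℝ E]
  {T : E →ₗ[ℝ] E} {b : OrthonormalBasis ι ℝ E} {μ : ι → ℝ}

theorem OrthonormalBasis.real_inner_eq_sum_repr_mul_repr (b : OrthonormalBasis ι ℝ E) (x y : E) :
    inner ℝ x y = ∑ i, b.repr x i * b.repr y i := by
  rw [← b.repr.inner_map_map, PiLp.inner_apply]
  simp [mul_comm]

theorem OrthonormalBasis.norm_sq_sub_mul_inner_eq_sum (hb : ∀ i, T (b i) = μ i • b i)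
    (t : ℝ) (x : E) :
    ‖T x‖ ^ 2 - t * inner ℝ x (T x) = ∑ i, μ i * (μ i - t) * b.repr x i ^ 2 := by
  simp only [← real_inner_self_eq_norm_sq, b.real_inner_eq_sum_repr_mul_repr,
    b.repr_apply_of_apply_eq_smul hb, Finset.mul_sum, ← Finset.sum_sub_distrib]
  exact Finset.sum_congr rfl fun i _ => by ring

theorem finrank_le_card_filter_le_of_apply_eq_smul (hb : ∀ i, T (b i) = μ i • b i)
    (hμ : ∀ i, 0 ≤ μ i) (t : ℝ) (W : Submodule ℝ E) (hker : ∀ x ∈ W, T x = 0 → x = 0)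
    (hW : ∀ x ∈ W, t * inner ℝ x (T x) ≤ ‖T x‖ ^ 2) :
    finrank ℝ W ≤ #{i | t ≤ μ i} := by
  by_contra! hlt
  obtain ⟨x, hxW, hx0, hxS⟩ := b.exists_mem_ne_zero_repr_eq_zero hlt
  set c := b.repr x
  have hterm : ∀ i, μ i * (μ i - t) * c i ^ 2 ≤ 0 := fun i => by
    by_cases hi : t ≤ μ i
    · simp [hxS i (by simpa using hi)]
    · exact mul_nonpos_of_nonpos_of_nonneg
        (mul_nonpos_of_nonneg_of_nonpos (hμ i) (by linarith)) (sq_nonneg _)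
  have hsum : 0 ≤ ∑ i, μ i * (μ i - t) * c i ^ 2 := by
    rw [← b.norm_sq_sub_mul_inner_eq_sum hb]
    exact sub_nonneg.2 (hW x hxW)
  have hzero := (Finset.sum_eq_zero_iff_of_nonpos fun i _ => hterm i).1
    (le_antisymm (Finset.sum_nonpos fun i _ => hterm i) hsum)
  refine hx0 (hker x hxW (b.repr.injective ?_))
  ext i
  rw [b.repr_apply_of_apply_eq_smul hb, map_zero]
  by_cases hi : t ≤ μ i
  · simp [c, hxS i (by simpa using hi)]
  · have hne : μ i - t ≠ 0 := by linarith
    have := hzero i (mem_univ i)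
    simp only [mul_eq_zero, hne, or_false, pow_eq_zero_iff two_ne_zero] at this
    simp [c, this]

end RealSpectral

theorem Multiset.countP_map_univ {ι α : Type*} [Fintype ι] (f : ι → α) (p : α → Prop)
    [DecidablePred p] : (univ.val.map f).countP p = #{i | p (f i)} :=
  Multiset.countP_map f _ p

theorem Monotone.le_apply_iff_sub_le_countP {n : ℕ} {α : Type*} [LinearOrder α] {f : Fin n → α}
    (hf : Monotone f) (k : Fin n) (t : α) :
    t ≤ f k ↔ n - k ≤ (univ.val.map f).countP (t ≤ ·) := by
  rw [Multiset.countP_map_univ]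
  constructor
  · intro h
    calc n - k = #(Ici k) := (Fin.card_Ici k).symm
      _ ≤ #{i | t ≤ f i} := card_le_card fun i hi => by
        simpa using h.trans (hf (mem_Ici.1 hi))
  · intro h
    by_contra! hlt
    have : #{i | t ≤ f i} ≤ #(Ioi k) := card_le_card fun i hi => by
      simp only [mem_filter, mem_univ, true_and] at hi
      exact mem_Ioi.2 (lt_of_not_ge fun hik => (hf hik).not_gt (hlt.trans_le hi))
    rw [Fin.card_Ioi] at this
    omega

theorem Finset.sum_compl_pair {V M : Type*} [Fintype V] [DecidableEq V] [AddCommGroup M]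
    {u v : V} (huv : u ≠ v) (g : V → M) :
    ∑ w ∈ {u, v}ᶜ, g w = ∑ w, g w - g u - g v := by
  rw [← Finset.sum_compl_add_sum {u, v}, Finset.sum_pair huv]
  abel

theorem dotProduct_sub_mul_single_add_single_dotProduct {V : Type*} [Fintype V] [DecidableEq V]
    {u v : V} (huv : u ≠ v) (t α β : ℝ) (y : V → ℝ) :
    y ⬝ᵥ y - t * ((Pi.single u α + Pi.single v β) ⬝ᵥ y) =
      y u * (y u - t * α) + y v * (y v - t * β) + ∑ w ∈ {u, v}ᶜ, y w ^ 2 := by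
  simp only [dotProduct, Finset.mul_sum, ← Finset.sum_sub_distrib]
  rw [← Finset.sum_compl_add_sum {u, v}, Finset.sum_pair huv, add_comm]
  congr 1
  · simp [huv, huv.symm]
    ring
  · refine Finset.sum_congr rfl fun w hw => ?_
    simp only [mem_compl, mem_insert, mem_singleton, not_or] at hw
    simp [hw.1, hw.2]
    ring

theorem sq_add_sub_le_mul {p q t : ℝ} (hp : 1 ≤ p) (hq : 1 ≤ q) (htp : t ≤ p) (htq : t ≤ q) :
    (p + q - t) ^ 2 ≤ p * (p + 1 - t) * (q * (q + 1 - t)) := by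
  have h₁ : p + q - t ≤ p * (q + 1 - t) := by nlinarith
  have h₂ : p + q - t ≤ q * (p + 1 - t) := by nlinarith
  nlinarith [mul_le_mul h₁ h₂ (by linarith) (by nlinarith)]

theorem two_mul_mul_le_of_sq_le_mul {a b c α β : ℝ} (ha : 0 < a) (hb : b ^ 2 ≤ a * c) :
    2 * α * β * b ≤ a * α ^ 2 + c * β ^ 2 := by
  nlinarith [sq_nonneg (a * α - b * β), mul_nonneg (sub_nonneg.2 hb) (sq_nonneg β)]

theorem mul_sub_mul_sub_nonneg {p t α β : ℝ} (hp : 0 ≤ p) (htp : t ≤ p) (hαβ : α * β ≤ 0) :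
    0 ≤ (p * α - β) * (p * α - β - t * α) := by
  nlinarith [mul_nonneg (mul_nonneg hp (sub_nonneg.2 htp)) (sq_nonneg α),
    mul_nonneg (neg_nonneg.2 hαβ) (by linarith : 0 ≤ 2 * p - t), sq_nonneg β]

namespace SimpleGraph

variable {V : Type*} [Fintype V] [DecidableEq V] (G : SimpleGraph V) [DecidableRel G.Adj]
  {u v : V}

theorem lapMatrix_mulVec_single_add_single_apply (α β : ℝ) (w : V) :
    (G.lapMatrix ℝ *ᵥ (Pi.single u α + Pi.single v β)) w =
      G.degree w * (Pi.single u α + Pi.single v β : V → ℝ) w -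
        ((if G.Adj w u then α else 0) + if G.Adj w v then β else 0) := by
  simp [lapMatrix_mulVec_apply, Finset.sum_add_distrib, Finset.sum_pi_single']

theorem sq_mul_degree_sub_one_add_le_sum_compl (huv : u ≠ v) (hadj : G.Adj u v)
    {α β : ℝ} (hαβ : 0 ≤ α * β) :
    α ^ 2 * (G.degree u - 1) + β ^ 2 * (G.degree v - 1) ≤
      ∑ w ∈ {u, v}ᶜ, ((if G.Adj w u then α else 0) + if G.Adj w v then β else 0) ^ 2 := by
  have hdeg (z : V) (c : ℝ) : ∑ w, (if G.Adj w z then c else 0) = c * G.degree z := by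
    rw [G.degree_eq_sum_if_adj (R := ℝ) z, Finset.mul_sum]
    exact Finset.sum_congr rfl fun w _ => by simp [G.adj_comm]
  calc α ^ 2 * (G.degree u - 1) + β ^ 2 * (G.degree v - 1)
      = ∑ w ∈ {u, v}ᶜ, ((if G.Adj w u then α ^ 2 else 0) + if G.Adj w v then β ^ 2 else 0) := by
        rw [Finset.sum_compl_pair huv, Finset.sum_add_distrib, hdeg, hdeg]
        simp [hadj, hadj.symm]
        ring
    _ ≤ _ := Finset.sum_le_sum fun w _ => by split_ifs <;> nlinarith

theorem mul_dotProduct_lapMatrix_mulVec_le (huv : u ≠ v) {t : ℝ}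
    (hu : t ≤ G.degree u) (hv : t ≤ G.degree v) (α β : ℝ) :
    t * ((Pi.single u α + Pi.single v β) ⬝ᵥ G.lapMatrix ℝ *ᵥ (Pi.single u α + Pi.single v β)) ≤
      (G.lapMatrix ℝ *ᵥ (Pi.single u α + Pi.single v β)) ⬝ᵥ
        (G.lapMatrix ℝ *ᵥ (Pi.single u α + Pi.single v β)) := by
  set y := G.lapMatrix ℝ *ᵥ (Pi.single u α + Pi.single v β)
  have hy := G.lapMatrix_mulVec_single_add_single_apply (u := u) (v := v) α β
  have hrest : ∑ w ∈ {u, v}ᶜ, y w ^ 2 =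
      ∑ w ∈ {u, v}ᶜ, ((if G.Adj w u then α else 0) + if G.Adj w v then β else 0) ^ 2 := by
    refine Finset.sum_congr rfl fun w hw => ?_
    simp only [mem_compl, mem_insert, mem_singleton, not_or] at hw
    simp only [y, hy, Pi.add_apply, Pi.single_eq_of_ne hw.1, Pi.single_eq_of_ne hw.2]
    ring
  have hrest₀ : 0 ≤ ∑ w ∈ {u, v}ᶜ, y w ^ 2 := Finset.sum_nonneg fun w _ => sq_nonneg _
  rw [← sub_nonneg, dotProduct_sub_mul_single_add_single_dotProduct huv]
  by_cases hadj : G.Adj u v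
  · have hyu : y u = G.degree u * α - β := by simp [y, hy, huv, hadj]
    have hyv : y v = G.degree v * β - α := by simp [y, hy, huv.symm, hadj.symm]
    have hdu : (1 : ℝ) ≤ G.degree u := by
      exact_mod_cast (G.degree_pos_iff_exists_adj u).2 ⟨v, hadj⟩
    have hdv : (1 : ℝ) ≤ G.degree v := by
      exact_mod_cast (G.degree_pos_iff_exists_adj v).2 ⟨u, hadj.symm⟩
    rw [hyu, hyv]
    rcases le_total (α * β) 0 with hαβ | hαβ
    · have := mul_sub_mul_sub_nonneg (by positivity) hu hαβ
      have := mul_sub_mul_sub_nonneg (by positivity) hv (by linarith : β * α ≤ 0)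
      linarith
    · -- what remains is `α² d_u (d_u + 1 - t) + β² d_v (d_v + 1 - t) - 2αβ (d_u + d_v - t)`
      have := G.sq_mul_degree_sub_one_add_le_sum_compl huv hadj hαβ
      have := two_mul_mul_le_of_sq_le_mul (α := α) (β := β) (by nlinarith)
        (sq_add_sub_le_mul hdu hdv hu hv)
      nlinarith
  · have hyu : y u = G.degree u * α := by simp [y, hy, huv, hadj]
    have hyv : y v = G.degree v * β := by simp [y, hy, huv.symm, hadj, G.adj_comm]
    rw [hyu, hyv]
    nlinarith [mul_nonneg (mul_nonneg (G.degree u).cast_nonneg (sub_nonneg.2 hu)) (sq_nonneg α),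
      mul_nonneg (mul_nonneg (G.degree v).cast_nonneg (sub_nonneg.2 hv)) (sq_nonneg β)]

theorem eq_zero_of_lapMatrix_mulVec_single_add_single_eq_zero (huv : u ≠ v)
    (hu : 0 < G.degree u) (hv : 0 < G.degree v)
    (hK₂ : G.Adj u v → G.degree u * G.degree v ≠ 1) {α β : ℝ}
    (h : G.lapMatrix ℝ *ᵥ (Pi.single u α + Pi.single v β) = 0) : α = 0 ∧ β = 0 := by
  have hyu := congrFun h u
  have hyv := congrFun h v
  rw [G.lapMatrix_mulVec_single_add_single_apply] at hyu hyv
  by_cases hadj : G.Adj u v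
  · simp [huv, huv.symm, hadj, hadj.symm] at hyu hyv
    have hprod : (G.degree u : ℝ) * G.degree v ≠ 1 := by exact_mod_cast hK₂ hadj
    have hα : α * (G.degree u * G.degree v - 1) = 0 := by
      linear_combination (G.degree v : ℝ) * hyu + hyv
    have hα0 : α = 0 := by simpa [sub_eq_zero, hprod] using hα
    exact ⟨hα0, by simpa [hα0] using hyu⟩
  · have hvu : ¬G.Adj v u := fun h => hadj h.symm
    simp [huv, huv.symm, hadj, hvu, hu.ne', hv.ne'] at hyu hyv
    exact ⟨hyu, hyv⟩

theorem two_le_card_filter_le_eigenvalues_lapMatrix (huv : u ≠ v) {t : ℝ}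
    (ht : 0 < t) (hu : t ≤ G.degree u) (hv : t ≤ G.degree v)
    (hK₂ : G.Adj u v → G.degree u * G.degree v ≠ 1) :
    2 ≤ #{i | t ≤ (G.isHermitian_lapMatrix ℝ).eigenvalues i} := by
  set hA := G.isHermitian_lapMatrix ℝ
  set e : Fin 2 → EuclideanSpace ℝ V := ![EuclideanSpace.single u 1, EuclideanSpace.single v 1]
  have he : LinearIndependent ℝ e := by
    refine LinearIndependent.pair_iff.2 fun s r h => ?_
    have hu := congrArg (fun x : EuclideanSpace ℝ V => x u) h
    have hv := congrArg (fun x : EuclideanSpace ℝ V => x v) h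
    simp [huv, huv.symm] at hu hv
    exact ⟨hu, hv⟩
  have hofLp : ∀ x ∈ Submodule.span ℝ (Set.range e), ∃ α β : ℝ,
      WithLp.ofLp x = Pi.single u α + Pi.single v β := by
    intro x hx
    obtain ⟨c, rfl⟩ := (Submodule.mem_span_range_iff_exists_fun ℝ).1 hx
    refine ⟨c 0, c 1, ?_⟩
    ext w
    simp [e, Fin.sum_univ_two, Pi.single_apply]
  have := finrank_le_card_filter_le_of_apply_eq_smul (T := toEuclideanLin (G.lapMatrix ℝ))
    (b := hA.eigenvectorBasis) (fun i => ?_) (G.posSemidef_lapMatrix ℝ).eigenvalues_nonneg t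
    (Submodule.span ℝ (Set.range e)) ?_ ?_
  · simpa [finrank_span_eq_card he] using this
  · exact WithLp.ofLp_injective _ (by simpa [toLpLin_apply] using hA.mulVec_eigenvectorBasis i)
  · intro x hx hTx
    obtain ⟨α, β, hxe⟩ := hofLp x hx
    have hL : G.lapMatrix ℝ *ᵥ (Pi.single u α + Pi.single v β) = 0 := by
      simpa [toLpLin_apply, hxe] using congrArg WithLp.ofLp hTx
    obtain ⟨rfl, rfl⟩ := G.eq_zero_of_lapMatrix_mulVec_single_add_single_eq_zero huv
      (by exact_mod_cast ht.trans_le hu) (by exact_mod_cast ht.trans_le hv) hK₂ hL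
    exact WithLp.ofLp_injective _ (by simpa using hxe)
  · intro x hx
    obtain ⟨α, β, hxe⟩ := hofLp x hx
    rw [← real_inner_self_eq_norm_sq]
    simp only [EuclideanSpace.inner_eq_star_dotProduct, toLpLin_apply, hxe, star_trivial]
    rw [dotProduct_comm]
    exact G.mul_dotProduct_lapMatrix_mulVec_le huv hu hv α β

theorem isCliquePlusIsolated_two_of_adj (hadj : G.Adj u v)
    (hiso : ∀ w, w ≠ u → w ≠ v → G.degree w = 0) : IsCliquePlusIsolated G 2 := by
  have hmem : ∀ a b, G.Adj a b → a = u ∨ a = v := fun a b hab => by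
    by_contra! h
    exact (hiso a h.1 h.2).not_gt ((G.degree_pos_iff_exists_adj a).2 ⟨b, hab⟩)
  refine ⟨{u, v}, card_pair hadj.ne, fun a b => ⟨fun hab => ?_, ?_⟩⟩
  · simpa [hab.ne] using And.intro (hmem a b hab) (hmem b a hab.symm)
  · rintro ⟨hab, ha, hb⟩
    simp only [mem_insert, mem_singleton] at ha hb
    rcases ha with rfl | rfl <;> rcases hb with rfl | rfl
    all_goals first | exact absurd rfl hab | exact hadj | exact hadj.symm

theorem exists_pair_le_degree_of_not_isCliquePlusIsolated {t : ℕ}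
    (h2 : 2 ≤ #{w | t ≤ G.degree w}) (hG : ¬IsCliquePlusIsolated G 2) :
    ∃ u v, u ≠ v ∧ t ≤ G.degree u ∧ t ≤ G.degree v ∧
      (G.Adj u v → G.degree u * G.degree v ≠ 1) := by
  obtain ⟨u, hu, v, hv, huv⟩ := one_lt_card.1 h2
  simp only [mem_filter, mem_univ, true_and] at hu hv
  by_cases hK₂ : G.Adj u v ∧ G.degree u * G.degree v = 1
  · obtain ⟨hadj, hdeg⟩ := hK₂
    obtain ⟨hu1, -⟩ := mul_eq_one.1 hdeg
    obtain ⟨w, hwu, hwv, hw⟩ : ∃ w, w ≠ u ∧ w ≠ v ∧ 0 < G.degree w := by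
      by_contra! h
      exact hG (G.isCliquePlusIsolated_two_of_adj hadj fun w hwu hwv =>
        Nat.eq_zero_of_le_zero (h w hwu hwv))
    refine ⟨u, w, hwu.symm, hu, by omega, fun hadj' => absurd ?_ hwv⟩
    exact card_le_one.1 (by rw [G.card_neighborFinset_eq_degree, hu1])
      w ((G.mem_neighborFinset u w).2 hadj') v ((G.mem_neighborFinset u v).2 hadj)
  · exact ⟨u, v, huv, hu, hv, fun hadj hdeg => hK₂ ⟨hadj, hdeg⟩⟩

end SimpleGraph

/-- Li–Pan: if `G ≠ K_2 + (n-2)K_1`, then `λ_{n-1}(G) ≥ d_{n-1}(G)`. -/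
theorem lap_second_largest_eigenvalue_ge (n : ℕ) (hn : 2 ≤ n)
    (G : SimpleGraph (Fin n)) [DecidableRel G.Adj]
    (eigs : Fin n → ℝ) (heigs : Monotone eigs)
    (hroots : (G.lapMatrix ℝ).charpoly.roots = Finset.univ.val.map eigs)
    (d : Fin n → ℕ) (hd : Monotone d)
    (hdeg : Finset.univ.val.map d = Finset.univ.val.map (fun v => G.degree v))
    (hnot : ¬ IsCliquePlusIsolated G 2) :
    eigs ⟨n - 2, by omega⟩ ≥ (d ⟨n - 2, by omega⟩ : ℝ) := by
  have hsub : n - (n - 2) = 2 := by omega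
  set t := d ⟨n - 2, by omega⟩
  have hA := G.isHermitian_lapMatrix ℝ
  have hspec : 2 ≤ #{i | (t : ℝ) ≤ hA.eigenvalues i} := by
    rcases Nat.eq_zero_or_pos t with ht | ht
    · simpa [ht, (G.posSemidef_lapMatrix ℝ).eigenvalues_nonneg] using hn
    · have h2 := (hd.le_apply_iff_sub_le_countP ⟨n - 2, by omega⟩ t).1 le_rfl
      rw [hdeg, Multiset.countP_map_univ] at h2
      obtain ⟨u, v, huv, hu, hv, hK₂⟩ :=
        G.exists_pair_le_degree_of_not_isCliquePlusIsolated (by simpa [hsub] using h2) hnot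
      exact G.two_le_card_filter_le_eigenvalues_lapMatrix huv (by exact_mod_cast ht)
        (by exact_mod_cast hu) (by exact_mod_cast hv) hK₂
  rw [ge_iff_le, heigs.le_apply_iff_sub_le_countP, ← hroots, hA.roots_charpoly_eq_eigenvalues,
    Multiset.countP_map_univ]
  simpa [hsub] using hspec
end
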